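/- Consider the family of maps Φ_k: blow-up of ℙ¹ × 𝔸¹ at (0,0) → (ℙ¹)³ whose fiber over c ∈ 𝔸¹ \ {0} is φ_{k,c}(ξ) = (ξ^{k a₁}, c^{-k a₂} ξ^{k a₂}, 0). As c → 0, the fiber over 0 is the nodal curve ℙ¹ ⊔_pt ℙ¹ (two lines glued at a point) mapping by ξ₁ ↦ (ξ₁^{k a₁}, 0, 0) on one component and ξ₂ ↦ (0, ξ₂^{-k a₂}, 0) on the other, with the node mapping to (0,0,0). -/

import Mathlib

section IntToNatPow

variable {α : Type*}

theorem pow_toNat_of_nonneg [DivInvMonoid α] (x : α) {n : ℤ} (hn : 0 ≤ n) :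
    x ^ n.toNat = x ^ n := by
  rw [← zpow_natCast, Int.toNat_of_nonneg hn]

theorem zero_pow_toNat_of_pos [MonoidWithZero α] {n : ℤ} (hn : 0 < n) :
    (0 : α) ^ n.toNat = 0 :=
  zero_pow (by omega)

theorem div_pow_toNat_of_nonneg [DivisionCommMonoid α] (c ξ : α) {n : ℤ} (hn : 0 ≤ n) :
    (c / ξ) ^ n.toNat = c ^ n * ξ ^ (-n) := by
  rw [pow_toNat_of_nonneg _ hn, div_zpow, zpow_neg, div_eq_mul_inv]

end IntToNatPow

/-- `G` is `Φ_k` in the blow-up chart `(ξ, v)` with `t = ξ v`: the fiber over `c ≠ 0` is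
`v = c / ξ`, and the central fiber is `{v = 0} ∪ {ξ = 0}`, with node `(0, 0)`. -/
theorem stmt_10 (a₁ a₂ k : ℤ) (h₁ : 0 < a₁) (h₂ : a₂ < 0) (hk : 0 < k)
    (G : ℂ × ℂ → ℂ × ℂ × ℂ)
    (hG : ∀ ξ v : ℂ, G (ξ, v) = (ξ ^ (k * a₁).toNat, v ^ (-(k * a₂)).toNat, 0)) :
    (∀ c ξ : ℂ, ξ ≠ 0 →
      G (ξ, c / ξ) = (ξ ^ (k * a₁), c ^ (-(k * a₂)) * ξ ^ (k * a₂), (0 : ℂ))) ∧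
    (∀ ξ₁ : ℂ, G (ξ₁, 0) = (ξ₁ ^ (k * a₁), 0, 0)) ∧
    (∀ ξ₂ : ℂ, G (0, ξ₂) = (0, ξ₂ ^ (-(k * a₂)), 0)) ∧
    G (0, 0) = (0, 0, 0) := by
  have hm₁ : 0 < k * a₁ := mul_pos hk h₁
  have hm₂ : 0 < -(k * a₂) := neg_pos.mpr (mul_neg_of_pos_of_neg hk h₂)
  refine ⟨fun c ξ _ => ?_, fun ξ₁ => ?_, fun ξ₂ => ?_, ?_⟩
  · rw [hG, pow_toNat_of_nonneg _ hm₁.le, div_pow_toNat_of_nonneg _ _ hm₂.le, neg_neg]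
  · rw [hG, pow_toNat_of_nonneg _ hm₁.le, zero_pow_toNat_of_pos hm₂]
  · rw [hG, pow_toNat_of_nonneg _ hm₂.le, zero_pow_toNat_of_pos hm₁]
  · rw [hG, zero_pow_toNat_of_pos hm₁, zero_pow_toNat_of_pos hm₂]
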